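/- arXiv:2605.21202 — 3 statements merged into one kernel-verified Lean document; each statement's English description precedes it below -/
import Mathlib

section
/- Let u : [t1,t2] × [0,π] → ℝ^N be a C² map with ∂_t u · ∂_θ u = 0 on [t1,t2] × {0,π}, and let τ(u) = ∂_t² u + ∂_θ² u. Then the quantity F(t) := (1/2) ∫_0^π (|∂_t u|² - |∂_θ u|²)(t,θ) dθ - ∫_0^t ∫_0^π τ(u) · ∂_t u dθ ds is constant in t on [t1,t2] (assuming 0 ∈ [t1,t2]). -/
/-!
Differentiating under the integral sign gives `d/dt ½∫₀^π |∂ₜu|² = ∫₀^π ∂ₜ²u · ∂ₜu`, and an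
integration by parts in `θ` gives `d/dt ½∫₀^π |∂_θu|² = [∂ₜu · ∂_θu]₀^π - ∫₀^π ∂_θ²u · ∂ₜu`. The
boundary term vanishes by the orthogonality condition, so `F' = 0` on `[t1, t2]`.

The mixed derivative `∂ₜ∂_θu` is not available; the second formula is obtained by integrating by
parts the difference `∫ |∂_θu(t')|² - |∂_θu(t)|² = ∫ (∂_θu(t') + ∂_θu(t)) · ∂_θ(u(t') - u(t))`
before dividing by `t' - t` and letting `t' → t`.
-/

open MeasureTheory Real Set Filter Topology RealInnerProductSpace intervalIntegral Function

variable {E : Type*} [NormedAddCommGroup E] [InnerProductSpace ℝ E]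

theorem real_inner_add_sub_eq_norm_sq_sub_norm_sq (x y : E) :
    ⟪x + y, x - y⟫ = ‖x‖ ^ 2 - ‖y‖ ^ 2 := by
  rw [inner_sub_right, inner_add_left, inner_add_left, real_inner_self_eq_norm_sq,
    real_inner_self_eq_norm_sq, real_inner_comm y x]
  ring

theorem integral_inner_deriv_eq_sub {v v' w w' : ℝ → E} {a b : ℝ}
    (hv : ∀ x ∈ uIcc a b, HasDerivAt v (v' x) x) (hw : ∀ x ∈ uIcc a b, HasDerivAt w (w' x) x)
    (hv' : ContinuousOn v' (uIcc a b)) (hw' : ContinuousOn w' (uIcc a b)) :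
    ∫ x in a..b, ⟪v x, w' x⟫ = ⟪v b, w b⟫ - ⟪v a, w a⟫ - ∫ x in a..b, ⟪v' x, w x⟫ := by
  have hvc : ContinuousOn v (uIcc a b) := fun x hx => (hv x hx).continuousAt.continuousWithinAt
  have hwc : ContinuousOn w (uIcc a b) := fun x hx => (hw x hx).continuousAt.continuousWithinAt
  rw [eq_sub_iff_add_eq, ← integral_add (hvc.inner hw').intervalIntegrable
    (hv'.inner hwc).intervalIntegrable]
  exact integral_eq_sub_of_hasDerivAt (fun x hx => (hv x hx).inner ℝ (hw x hx))
    ((hvc.inner hw').add (hv'.inner hwc)).intervalIntegrable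

variable [CompleteSpace E]

theorem tendsto_inv_sub_mul_integral_inner_sub {f f' g : ℝ → ℝ → E}
    (hf : ∀ s θ, HasDerivAt (f · θ) (f' s θ) s) (hf' : Continuous (uncurry f'))
    (hg : Continuous (uncurry g)) (a b t : ℝ) :
    Tendsto (fun t' => (t' - t)⁻¹ * ∫ θ in a..b, ⟪g t' θ, f t' θ - f t θ⟫) (𝓝[≠] t)
      (𝓝 (∫ θ in a..b, ⟪g t θ, f' t θ⟫)) := by
  -- `S t' θ` is the mean of `f' · θ` over `[t, t']`, jointly continuous also across `t' = t`
  set S : ℝ → ℝ → E := fun t' θ => ∫ r in (0:ℝ)..1, f' (t + r • (t' - t)) θ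
  have hS : Continuous (uncurry S) :=
    continuous_parametric_intervalIntegral_of_continuous'
      (f := fun (p : ℝ × ℝ) r => f' (t + r • (p.1 - t)) p.2)
      (hf'.comp (f := fun q : (ℝ × ℝ) × ℝ => (t + q.2 • (q.1.1 - t), q.1.2)) (by fun_prop)) 0 1
  have hdiff : ∀ t' θ, f t' θ - f t θ = (t' - t) • S t' θ := fun t' θ => by
    have := integral_unitInterval_deriv_eq_sub (f := (f · θ)) (f' := (f' · θ)) (z₀ := t)
      (z₁ := t' - t) ((hf'.uncurry_right θ).comp (by fun_prop)).continuousOn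
      (fun r _ => hf (t + r • (t' - t)) θ)
    rwa [add_sub_cancel, eq_comm] at this
  have hlim : Tendsto (fun t' => ∫ θ in a..b, ⟪g t' θ, S t' θ⟫) (𝓝[≠] t)
      (𝓝 (∫ θ in a..b, ⟪g t θ, f' t θ⟫)) := by
    simpa [S] using
      ((continuous_parametric_intervalIntegral_of_continuous'
        (f := fun t' θ => ⟪g t' θ, S t' θ⟫) (hg.inner hS) a b).tendsto t).mono_left
        nhdsWithin_le_nhds
  refine hlim.congr' ?_
  filter_upwards [self_mem_nhdsWithin] with t' ht'
  simp_rw [hdiff, real_inner_smul_right, intervalIntegral.integral_const_mul,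
    inv_mul_cancel_left₀ (sub_ne_zero.2 ht')]

theorem hasDerivAt_integral_norm_sq {f f' : ℝ → ℝ → E} (hf : ∀ s θ, HasDerivAt (f · θ) (f' s θ) s)
    (hfc : Continuous (uncurry f)) (hf' : Continuous (uncurry f')) (a b t : ℝ) :
    HasDerivAt (fun s => ∫ θ in a..b, ‖f s θ‖ ^ 2) (2 * ∫ θ in a..b, ⟪f' t θ, f t θ⟫) t := by
  have hsq : ∀ s, IntervalIntegrable (fun θ => ‖f s θ‖ ^ 2) volume a b := fun s =>
    ((hfc.uncurry_left s).norm.pow 2).intervalIntegrable a b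
  have hlim := tendsto_inv_sub_mul_integral_inner_sub (g := fun t' θ => f t' θ + f t θ) hf hf'
    (hfc.add (hfc.comp (continuous_const.prodMk continuous_snd))) a b t
  have hval : ∫ θ in a..b, ⟪f t θ + f t θ, f' t θ⟫ = 2 * ∫ θ in a..b, ⟪f' t θ, f t θ⟫ := by
    rw [← intervalIntegral.integral_const_mul]
    congr with θ
    rw [inner_add_left, real_inner_comm]
    ring
  rw [hasDerivAt_iff_tendsto_slope, ← hval]
  refine hlim.congr fun t' => ?_
  rw [slope_def_field, div_eq_inv_mul, ← integral_sub (hsq t') (hsq t)]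
  simp_rw [real_inner_add_sub_eq_norm_sq_sub_norm_sq]

theorem hasDerivAt_integral_norm_sq_deriv_snd {u ut uθ uθθ : ℝ → ℝ → E}
    (hut : ∀ t θ, HasDerivAt (u · θ) (ut t θ) t) (huθ : ∀ t θ, HasDerivAt (u t ·) (uθ t θ) θ)
    (huθθ : ∀ t θ, HasDerivAt (uθ t ·) (uθθ t θ) θ) (hut_cont : Continuous (uncurry ut))
    (huθ_cont : Continuous (uncurry uθ)) (huθθ_cont : Continuous (uncurry uθθ)) (a b t : ℝ) :
    HasDerivAt (fun s => ∫ θ in a..b, ‖uθ s θ‖ ^ 2)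
      (2 * (⟪ut t b, uθ t b⟫ - ⟪ut t a, uθ t a⟫) - 2 * ∫ θ in a..b, ⟪uθθ t θ, ut t θ⟫) t := by
  have two_inner : ∀ x y : E, ⟪x + x, y⟫ = 2 * ⟪y, x⟫ := fun x y => by
    rw [← two_smul ℝ x, real_inner_smul_left, real_inner_comm]
  have hboundary : ∀ θ, Tendsto (fun t' => (t' - t)⁻¹ * ⟪uθ t' θ + uθ t θ, u t' θ - u t θ⟫)
      (𝓝[≠] t) (𝓝 (2 * ⟪ut t θ, uθ t θ⟫)) := fun θ => by
    rw [← two_inner]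
    refine ((((huθ_cont.uncurry_right θ).add continuous_const).tendsto t).mono_left
      nhdsWithin_le_nhds |>.inner (hasDerivAt_iff_tendsto_slope.1 (hut t θ))).congr fun t' => ?_
    rw [slope_def_module, real_inner_smul_right]
    rfl
  have hbulk := tendsto_inv_sub_mul_integral_inner_sub (g := fun t' θ => uθθ t' θ + uθθ t θ)
    hut hut_cont (huθθ_cont.add (huθθ_cont.comp (continuous_const.prodMk continuous_snd))) a b t
  beta_reduce at hbulk
  simp_rw [two_inner, intervalIntegral.integral_const_mul, real_inner_comm (uθθ t _)] at hbulk
  rw [hasDerivAt_iff_tendsto_slope, mul_sub]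
  refine (((hboundary b).sub (hboundary a)).sub hbulk).congr fun t' => ?_
  have hibp := integral_inner_deriv_eq_sub (a := a) (b := b)
    (v := fun θ => uθ t' θ + uθ t θ) (w := fun θ => u t' θ - u t θ)
    (fun θ _ => (huθθ t' θ).add (huθθ t θ)) (fun θ _ => (huθ t' θ).sub (huθ t θ))
    ((huθθ_cont.uncurry_left t').add (huθθ_cont.uncurry_left t)).continuousOn
    ((huθ_cont.uncurry_left t').sub (huθ_cont.uncurry_left t)).continuousOn
  have hsq : ∀ s, IntervalIntegrable (fun θ => ‖uθ s θ‖ ^ 2) volume a b := fun s =>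
    ((huθ_cont.uncurry_left s).norm.pow 2).intervalIntegrable a b
  simp_rw [real_inner_add_sub_eq_norm_sq_sub_norm_sq, integral_sub (hsq t') (hsq t)] at hibp
  rw [slope_def_field, div_eq_inv_mul, hibp]
  ring

theorem stmt_1_general (N : ℕ) (t1 t2 : ℝ)
    (u ut uθ utt uθθ : ℝ → ℝ → EuclideanSpace ℝ (Fin N))
    (hut : ∀ t θ, HasDerivAt (fun s => u s θ) (ut t θ) t)
    (huθ : ∀ t θ, HasDerivAt (fun φ => u t φ) (uθ t θ) θ)
    (hutt : ∀ t θ, HasDerivAt (fun s => ut s θ) (utt t θ) t)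
    (huθθ : ∀ t θ, HasDerivAt (fun φ => uθ t φ) (uθθ t θ) θ)
    (hc1 : Continuous fun p : ℝ × ℝ => ut p.1 p.2)
    (hc2 : Continuous fun p : ℝ × ℝ => uθ p.1 p.2)
    (hc3 : Continuous fun p : ℝ × ℝ => utt p.1 p.2)
    (hc4 : Continuous fun p : ℝ × ℝ => uθθ p.1 p.2)
    (hbd : ∀ t ∈ Set.Icc t1 t2,
      (inner ℝ (ut t 0) (uθ t 0) : ℝ) = 0 ∧ (inner ℝ (ut t π) (uθ t π) : ℝ) = 0)
    (F : ℝ → ℝ)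
    (hF : ∀ t, F t = (1/2) * (∫ θ in (0:ℝ)..π, (‖ut t θ‖^2 - ‖uθ t θ‖^2))
      - ∫ s in (0:ℝ)..t, ∫ θ in (0:ℝ)..π, (inner ℝ (utt s θ + uθθ s θ) (ut s θ) : ℝ)) :
    ∀ s ∈ Set.Icc t1 t2, ∀ t ∈ Set.Icc t1 t2, F s = F t := by
  have hsq : ∀ {v : ℝ → ℝ → EuclideanSpace ℝ (Fin N)}, Continuous (uncurry v) →
      ∀ t, IntervalIntegrable (fun θ => ‖v t θ‖ ^ 2) volume 0 π := fun hv t =>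
    ((hv.uncurry_left t).norm.pow 2).intervalIntegrable 0 π
  have hF' : F = fun t => 1 / 2 * ((∫ θ in (0:ℝ)..π, ‖ut t θ‖ ^ 2) - ∫ θ in (0:ℝ)..π, ‖uθ t θ‖ ^ 2)
      - ∫ s in (0:ℝ)..t, ∫ θ in (0:ℝ)..π, ⟪utt s θ + uθθ s θ, ut s θ⟫ :=
    funext fun t => by rw [hF, integral_sub (hsq hc1 t) (hsq hc2 t)]
  have hderiv : ∀ t ∈ Icc t1 t2, HasDerivAt F 0 t := fun t ht => by
    obtain ⟨h0, hπ⟩ := hbd t ht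
    have hsplit : ∫ θ in (0:ℝ)..π, ⟪utt t θ + uθθ t θ, ut t θ⟫
        = (∫ θ in (0:ℝ)..π, ⟪utt t θ, ut t θ⟫) + ∫ θ in (0:ℝ)..π, ⟪uθθ t θ, ut t θ⟫ := by
      simp_rw [inner_add_left]
      exact integral_add (((hc3.uncurry_left t).inner (hc1.uncurry_left t)).intervalIntegrable _ _)
        (((hc4.uncurry_left t).inner (hc1.uncurry_left t)).intervalIntegrable _ _)
    have hK := ((continuous_parametric_intervalIntegral_of_continuous'
      (f := fun s θ => ⟪utt s θ + uθθ s θ, ut s θ⟫) (μ := volume) ((hc3.add hc4).inner hc1) 0 π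
      ).integral_hasStrictDerivAt 0 t).hasDerivAt
    rw [hF']
    refine ((((hasDerivAt_integral_norm_sq hutt hc1 hc3 0 π t).sub
      (hasDerivAt_integral_norm_sq_deriv_snd hut huθ huθθ hc1 hc2 hc4 0 π t)).const_mul
        (1 / 2)).sub hK).congr_deriv ?_
    rw [h0, hπ, hsplit]
    ring
  have hconst := constant_of_has_deriv_right_zero
    (fun x hx => (hderiv x hx).continuousAt.continuousWithinAt)
    (fun x hx => (hderiv x (Ico_subset_Icc_self hx)).hasDerivWithinAt)
  intro s hs t ht
  rw [hconst s hs, hconst t ht]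

/-- The Pohozaev-type quantity
`F(t) = (1/2)∫₀^π (|∂ₜu|² - |∂_θu|²)(t,θ)dθ - ∫₀^t ∫₀^π τ(u)·∂ₜu dθ ds`
is constant in `t` for a C² map on `[t1,t2] × [0,π]` with free boundary
orthogonality on `θ ∈ {0, π}` (assuming `0 ∈ [t1,t2]`). -/
theorem stmt_1 (N : ℕ) (t1 t2 : ℝ) (ht : t1 ≤ t2) (h01 : t1 ≤ 0) (h02 : 0 ≤ t2)
    (u ut uθ utt uθθ : ℝ → ℝ → EuclideanSpace ℝ (Fin N))
    (hut : ∀ t θ, HasDerivAt (fun s => u s θ) (ut t θ) t)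
    (huθ : ∀ t θ, HasDerivAt (fun φ => u t φ) (uθ t θ) θ)
    (hutt : ∀ t θ, HasDerivAt (fun s => ut s θ) (utt t θ) t)
    (huθθ : ∀ t θ, HasDerivAt (fun φ => uθ t φ) (uθθ t θ) θ)
    (hc1 : Continuous fun p : ℝ × ℝ => ut p.1 p.2)
    (hc2 : Continuous fun p : ℝ × ℝ => uθ p.1 p.2)
    (hc3 : Continuous fun p : ℝ × ℝ => utt p.1 p.2)
    (hc4 : Continuous fun p : ℝ × ℝ => uθθ p.1 p.2)
    (hbd : ∀ t ∈ Set.Icc t1 t2,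
      (inner ℝ (ut t 0) (uθ t 0) : ℝ) = 0 ∧ (inner ℝ (ut t π) (uθ t π) : ℝ) = 0)
    (F : ℝ → ℝ)
    (hF : ∀ t, F t = (1/2) * (∫ θ in (0:ℝ)..π, (‖ut t θ‖^2 - ‖uθ t θ‖^2))
      - ∫ s in (0:ℝ)..t, ∫ θ in (0:ℝ)..π, (inner ℝ (utt s θ + uθθ s θ) (ut s θ) : ℝ)) :
    ∀ s ∈ Set.Icc t1 t2, ∀ t ∈ Set.Icc t1 t2, F s = F t :=
  stmt_1_general N t1 t2 u ut uθ utt uθθ hut huθ hutt huθθ hc1 hc2 hc3 hc4 hbd F hF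
end

section
/- Let r ∈ (0, 1/2), C > 0, and let E : [T₀, ∞) → (0, ∞) be C¹ with (d/dt)(1/E(t)) ≥ 1 - C t^{-2r} for all t ≥ T₀. Then there exist constants C' > 0 and T₁ ≥ T₀ such that E(t) ≤ 1/t + C'/t^{1+2r} for all t ≥ T₁. -/
open Real Set Filter

/-!
Since `s ↦ s - C/(1-2r) · s^(1-2r)` has derivative `1 - C s^(-2r)`, comparison of derivatives
gives `1/E(t) ≥ t - a(t)` with `a(t) = C/(1-2r) · t^(1-2r) + T₀`. As `a(t) = o(t)`, eventually
`0 ≤ a ≤ t/2`, and then `E(t) ≤ 1/(t - a) ≤ 1/t + 2a/t² = 1/t + O(t^(-1-2r))`.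
-/

lemma sub_le_sub_of_hasDerivAt_le {f g f' g' : ℝ → ℝ} {a : ℝ}
    (hf : ∀ t, a ≤ t → HasDerivAt f (f' t) t) (hg : ∀ t, a ≤ t → HasDerivAt g (g' t) t)
    (hle : ∀ t, a ≤ t → g' t ≤ f' t) {t : ℝ} (ht : a ≤ t) :
    g t - g a ≤ f t - f a := by
  have hderiv : ∀ s, a ≤ s → HasDerivAt (f - g) (f' s - g' s) s :=
    fun s hs => (hf s hs).sub (hg s hs)
  have hmono : MonotoneOn (f - g) (Ici a) := by
    refine monotoneOn_of_hasDerivWithinAt_nonneg (convex_Ici a)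
      (fun s hs => (hderiv s hs).continuousAt.continuousWithinAt)
      (fun s hs => (hderiv s (interior_subset hs)).hasDerivWithinAt)
      (fun s hs => sub_nonneg.2 (hle s (interior_subset hs)))
  have := hmono self_mem_Ici ht ht
  simp only [Pi.sub_apply] at this
  linarith

lemma hasDerivAt_sub_div_mul_rpow {C β t : ℝ} (hβ : β ≠ 0) (ht : 0 < t) :
    HasDerivAt (fun s => s - C / β * s ^ β) (1 - C * t ^ (β - 1)) t := by
  have h : HasDerivAt (fun s => s - C / β * s ^ β) (1 - C / β * (β * t ^ (β - 1))) t :=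
    (hasDerivAt_id' t).sub ((hasDerivAt_rpow_const (Or.inl ht.ne')).const_mul (C / β))
  convert h using 1
  field_simp

lemma inv_sub_le_inv_add_two_mul_div_sq {t a : ℝ} (ha : 0 ≤ a) (hat : a ≤ t / 2) :
    (t - a)⁻¹ ≤ t⁻¹ + 2 * a / t ^ 2 := by
  rcases ha.eq_or_lt with rfl | ha
  · simp
  have ht : 0 < t := by linarith
  rw [inv_le_iff_one_le_mul₀ (by linarith)]
  field_simp
  nlinarith [mul_nonneg ha.le (sub_nonneg.2 hat)]

lemma eventually_inv_sub_rpow_le {α A B : ℝ} (hα₀ : 0 < α) (hα₁ : α ≤ 1) (hA : 0 ≤ A)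
    (hB : 0 ≤ B) :
    ∀ᶠ t in atTop, 0 < t - (A * t ^ (1 - α) + B) ∧
      (t - (A * t ^ (1 - α) + B))⁻¹ ≤ 1 / t + 2 * (A + B) / t ^ (1 + α) := by
  have hsmall : ∀ᶠ t : ℝ in atTop, A * t ^ (-α) ≤ 1 / 4 :=
    ((tendsto_rpow_neg_atTop hα₀).const_mul A).eventually_le_const
      (by rw [mul_zero]; norm_num)
  filter_upwards [hsmall, eventually_ge_atTop (max 1 (4 * B))] with t hsmall ht
  have ht1 : 1 ≤ t := le_of_max_le_left ht
  have ht0 : 0 < t := by linarith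
  have hsplit : t ^ (1 - α) = t ^ (-α) * t := by
    rw [sub_eq_neg_add, rpow_add ht0, rpow_one]
  have hpow1 : 1 ≤ t ^ (1 - α) := one_le_rpow ht1 (by linarith)
  have ha : A * t ^ (1 - α) + B ≤ t / 2 := by
    rw [hsplit]
    nlinarith [le_of_max_le_right ht]
  have ha' : A * t ^ (1 - α) + B ≤ (A + B) * t ^ (1 - α) := by nlinarith
  have hpow : t ^ (1 - α) / t ^ 2 = 1 / t ^ (1 + α) := by
    rw [div_eq_div_iff (by positivity) (by positivity), ← rpow_natCast, ← rpow_add ht0]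
    norm_num
  refine ⟨by nlinarith [rpow_nonneg ht0.le (1 - α)], ?_⟩
  calc (t - (A * t ^ (1 - α) + B))⁻¹
      ≤ t⁻¹ + 2 * (A * t ^ (1 - α) + B) / t ^ 2 :=
        inv_sub_le_inv_add_two_mul_div_sq (by positivity) ha
    _ ≤ 1 / t + 2 * ((A + B) * t ^ (1 - α)) / t ^ 2 := by
        rw [one_div]; gcongr
    _ = 1 / t + 2 * (A + B) * (t ^ (1 - α) / t ^ 2) := by ring
    _ = 1 / t + 2 * (A + B) / t ^ (1 + α) := by rw [hpow, mul_one_div]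

theorem stmt_7_general (r C T₀ : ℝ) (hr : 0 < r ∧ r < 1/2) (hC : 0 < C) (hT₀ : 0 < T₀)
    (E G : ℝ → ℝ)
    (hpos : ∀ t, T₀ ≤ t → 0 < E t)
    (hderiv : ∀ t, T₀ ≤ t → HasDerivAt (fun s => (E s)⁻¹) (G t) t)
    (hineq : ∀ t, T₀ ≤ t → 1 - C * t ^ (-(2 * r)) ≤ G t) :
    ∃ C' : ℝ, 0 < C' ∧ ∃ T₁ : ℝ, T₀ ≤ T₁ ∧
      ∀ t, T₁ ≤ t → E t ≤ 1 / t + C' / t ^ (1 + 2 * r) := by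
  obtain ⟨hr₀, hr₁⟩ := hr
  set A := C / (1 - 2 * r)
  have hA : 0 < A := div_pos hC (by linarith)
  -- `T₀` bounds the initial defect `T₀ - A T₀^(1-2r) - 1/E(T₀)` of the comparison.
  have hlower : ∀ t, T₀ ≤ t → t - (A * t ^ (1 - 2 * r) + T₀) ≤ (E t)⁻¹ := by
    intro t ht
    have hcmp := sub_le_sub_of_hasDerivAt_le hderiv
      (fun s hs => hasDerivAt_sub_div_mul_rpow (C := C) (β := 1 - 2 * r) (by linarith)
        (hT₀.trans_le hs))
      (fun s hs => by rw [sub_sub_cancel_left]; exact hineq s hs) ht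
    linarith [inv_pos.2 (hpos T₀ le_rfl), mul_nonneg hA.le (rpow_nonneg hT₀.le (1 - 2 * r))]
  obtain ⟨T, hT⟩ := eventually_atTop.1 <|
    eventually_inv_sub_rpow_le (by linarith : 0 < 2 * r) (by linarith) hA.le hT₀.le
  refine ⟨2 * (A + T₀), by positivity, max T₀ T, le_max_left _ _, fun t ht => ?_⟩
  obtain ⟨hposlower, hbound⟩ := hT t (le_of_max_le_right ht)
  calc E t = ((E t)⁻¹)⁻¹ := (inv_inv _).symm
    _ ≤ (t - (A * t ^ (1 - 2 * r) + T₀))⁻¹ :=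
        inv_anti₀ hposlower (hlower t (le_of_max_le_left ht))
    _ ≤ _ := hbound

/-- Refined energy decay: if `(d/dt)(1/E) ≥ 1 - C t^{-2r}` on `[T₀,∞)` with
`r ∈ (0,1/2)`, then `E(t) ≤ 1/t + C'/t^{1+2r}` for all large `t`. -/
theorem stmt_7 (r C T₀ : ℝ) (hr : 0 < r ∧ r < 1/2) (hC : 0 < C) (hT₀ : 0 < T₀)
    (E G : ℝ → ℝ)
    (hpos : ∀ t, T₀ ≤ t → 0 < E t)
    (hderiv : ∀ t, T₀ ≤ t → HasDerivAt (fun s => (E s)⁻¹) (G t) t)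
    (hcont : ContinuousOn G (Set.Ici T₀))
    (hineq : ∀ t, T₀ ≤ t → 1 - C * t ^ (-(2 * r)) ≤ G t) :
    ∃ C' : ℝ, 0 < C' ∧ ∃ T₁ : ℝ, T₀ ≤ T₁ ∧
      ∀ t, T₁ ≤ t → E t ≤ 1 / t + C' / t ^ (1 + 2 * r) :=
  stmt_7_general r C T₀ hr hC hT₀ E G hpos hderiv hineq
end

section
/- Let u : Q → ℝ^N be C¹ on Q = [−T, T] × [0,π] with T ≥ 1, and let α := ∫_0^π (|∂_t u|² − |∂_θ u|²)(t₀,θ) dθ − 2∫∫_{[0,t₀]×[0,π]} τ · ∂_t u dt dθ be independent of t₀ ∈ [−T,T] (given). Then |α| ≤ (2/T) E(u) + 2 ‖τ‖_{L²(Q)} √(2E(u)), where E(u) = (1/2)∫_Q |∇u|² and τ ∈ L²(Q, ℝ^N). -/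
open MeasureTheory Real Set Filter Topology

/-!
Since `α` does not depend on the slice, evaluate it at a time `t₀ ∈ (0, T]` where the slice energy
`∫₀^π (|∂_t u|² + |∂_θ u|²)` is at most its mean over `(0, T]`, hence at most `2E/T`; this bounds
the first term. For the tension term, Young's inequality `2|⟨τ, ∂_t u⟩| ≤ r|τ|² + r⁻¹|∂_t u|²`
integrated over `[0, t₀] × [0, π]` and optimised over `r > 0` gives the Cauchy–Schwarz bound
`|∫∫ τ · ∂_t u| ≤ ‖τ‖_{L²} √(2E)`.
-/

theorem exists_mem_Ioc_le_intervalIntegral_div {f : ℝ → ℝ} {a b : ℝ} (hab : a < b)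
    (hf : IntervalIntegrable f volume a b) :
    ∃ x ∈ Ioc a b, f x ≤ (∫ x in a..b, f x) / (b - a) := by
  rw [← interval_average_eq_div, ← uIoc_of_le hab.le]
  refine exists_le_setAverage ?_ (by simp [Real.volume_uIoc]) hf.def'
  simpa [Real.volume_uIoc, sub_eq_zero] using hab.ne'

theorem le_two_mul_sqrt_mul_sqrt_of_forall_le {x A B : ℝ} (hA : 0 ≤ A) (hB : 0 ≤ B)
    (h : ∀ r : ℝ, 0 < r → x ≤ r * A + r⁻¹ * B) : x ≤ 2 * √A * √B := by
  have hε : ∀ ε : ℝ, 0 < ε → x ≤ 2 * √(A + ε) * √(B + ε) := by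
    intro ε hε
    have hA' : 0 < √(A + ε) := sqrt_pos.mpr (by linarith)
    have hB' : 0 < √(B + ε) := sqrt_pos.mpr (by linarith)
    -- `r A + r⁻¹ B` need not attain its infimum when `A = 0` or `B = 0`, so perturb both by `ε`
    calc x ≤ √(B + ε) / √(A + ε) * A + (√(B + ε) / √(A + ε))⁻¹ * B := h _ (by positivity)
      _ ≤ √(B + ε) / √(A + ε) * √(A + ε) ^ 2 + (√(B + ε) / √(A + ε))⁻¹ * √(B + ε) ^ 2 := by
        rw [sq_sqrt (by linarith), sq_sqrt (by linarith)]
        gcongr <;> linarith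
      _ = 2 * √(A + ε) * √(B + ε) := by field_simp; ring
  have hlim : Tendsto (fun ε => 2 * √(A + ε) * √(B + ε)) (𝓝[>] 0) (𝓝 (2 * √A * √B)) := by
    have hc : Continuous fun ε : ℝ => 2 * √(A + ε) * √(B + ε) := by fun_prop
    simpa using tendsto_nhdsWithin_of_tendsto_nhds (hc.tendsto 0)
  exact ge_of_tendsto hlim (eventually_nhdsWithin_of_forall hε)

theorem two_mul_abs_intervalIntegral_le {f F G : ℝ → ℝ} {a b r : ℝ} (hab : a ≤ b)
    (hF : IntervalIntegrable F volume a b) (hG : IntervalIntegrable G volume a b)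
    (h : ∀ x ∈ Ioc a b, 2 * |f x| ≤ r * F x + r⁻¹ * G x) :
    2 * |∫ x in a..b, f x| ≤ r * (∫ x in a..b, F x) + r⁻¹ * ∫ x in a..b, G x := by
  calc 2 * |∫ x in a..b, f x| = ‖∫ x in a..b, 2 * f x‖ := by
        rw [intervalIntegral.integral_const_mul, norm_mul, norm_two, norm_eq_abs]
    _ ≤ ∫ x in a..b, (r * F x + r⁻¹ * G x) :=
        intervalIntegral.norm_integral_le_of_norm_le hab
          (ae_of_all _ fun x hx => by simpa [abs_mul] using h x hx)
          ((hF.const_mul r).add (hG.const_mul r⁻¹))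
    _ = r * (∫ x in a..b, F x) + r⁻¹ * ∫ x in a..b, G x := by
        rw [intervalIntegral.integral_add (hF.const_mul r) (hG.const_mul r⁻¹),
          intervalIntegral.integral_const_mul, intervalIntegral.integral_const_mul]

theorem abs_intervalIntegral_norm_sq_sub_le {E : Type*} [NormedAddCommGroup E] {f g : ℝ → E}
    {a b : ℝ} (hab : a ≤ b)
    (hfg : IntervalIntegrable (fun x => ‖f x‖ ^ 2 + ‖g x‖ ^ 2) volume a b) :
    |∫ x in a..b, (‖f x‖ ^ 2 - ‖g x‖ ^ 2)| ≤ ∫ x in a..b, (‖f x‖ ^ 2 + ‖g x‖ ^ 2) := by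
  rw [← norm_eq_abs]
  refine intervalIntegral.norm_integral_le_of_norm_le hab (ae_of_all _ fun x _ => ?_) hfg
  rw [norm_eq_abs, abs_sub_le_iff]
  constructor <;> linarith [sq_nonneg ‖f x‖, sq_nonneg ‖g x‖]

section InnerProductSpace

variable {E : Type*} [NormedAddCommGroup E] [InnerProductSpace ℝ E]

theorem two_mul_abs_real_inner_le_add (x y : E) {r : ℝ} (hr : 0 < r) :
    2 * |inner ℝ x y| ≤ r * ‖x‖ ^ 2 + r⁻¹ * ‖y‖ ^ 2 :=
  calc 2 * |inner ℝ x y| ≤ 2 * ‖x‖ * ‖y‖ := by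
        rw [mul_assoc]; gcongr; exact abs_real_inner_le_norm x y
    _ ≤ r * ‖x‖ ^ 2 + r⁻¹ * ‖y‖ ^ 2 := two_mul_le_add_mul_sq hr

theorem two_mul_abs_integral_integral_inner_le {f g : ℝ → ℝ → E} {G : ℝ → ℝ → ℝ}
    {a b c d r : ℝ} (hr : 0 < r) (hab : a ≤ b) (hcd : c ≤ d)
    (hf : ∀ t, IntervalIntegrable (fun θ => ‖f t θ‖ ^ 2) volume c d)
    (hG : ∀ t, IntervalIntegrable (G t) volume c d)
    (hf' : IntervalIntegrable (fun t => ∫ θ in c..d, ‖f t θ‖ ^ 2) volume a b)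
    (hG' : IntervalIntegrable (fun t => ∫ θ in c..d, G t θ) volume a b)
    (hgG : ∀ t θ, ‖g t θ‖ ^ 2 ≤ G t θ) :
    2 * |∫ t in a..b, ∫ θ in c..d, inner ℝ (f t θ) (g t θ)|
      ≤ r * (∫ t in a..b, ∫ θ in c..d, ‖f t θ‖ ^ 2) + r⁻¹ * ∫ t in a..b, ∫ θ in c..d, G t θ :=
  two_mul_abs_intervalIntegral_le hab hf' hG' fun t _ =>
    two_mul_abs_intervalIntegral_le hcd (hf t) (hG t) fun θ _ =>
      (two_mul_abs_real_inner_le_add _ _ hr).trans (by gcongr; exact hgG t θ)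

theorem abs_integral_integral_inner_le_sqrt_mul_sqrt {f g : ℝ → ℝ → E} {G : ℝ → ℝ → ℝ}
    {a b c d : ℝ} (hab : a ≤ b) (hcd : c ≤ d)
    (hf : ∀ t, IntervalIntegrable (fun θ => ‖f t θ‖ ^ 2) volume c d)
    (hG : ∀ t, IntervalIntegrable (G t) volume c d)
    (hf' : IntervalIntegrable (fun t => ∫ θ in c..d, ‖f t θ‖ ^ 2) volume a b)
    (hG' : IntervalIntegrable (fun t => ∫ θ in c..d, G t θ) volume a b)
    (hgG : ∀ t θ, ‖g t θ‖ ^ 2 ≤ G t θ) :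
    |∫ t in a..b, ∫ θ in c..d, inner ℝ (f t θ) (g t θ)|
      ≤ √(∫ t in a..b, ∫ θ in c..d, ‖f t θ‖ ^ 2) * √(∫ t in a..b, ∫ θ in c..d, G t θ) := by
  have hf0 : 0 ≤ ∫ t in a..b, ∫ θ in c..d, ‖f t θ‖ ^ 2 :=
    intervalIntegral.integral_nonneg hab fun t _ =>
      intervalIntegral.integral_nonneg hcd fun θ _ => sq_nonneg _
  have hG0 : 0 ≤ ∫ t in a..b, ∫ θ in c..d, G t θ :=
    intervalIntegral.integral_nonneg hab fun t _ =>
      intervalIntegral.integral_nonneg hcd fun θ _ => (sq_nonneg _).trans (hgG t θ)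
  have h := le_two_mul_sqrt_mul_sqrt_of_forall_le hf0 hG0 fun r hr =>
    two_mul_abs_integral_integral_inner_le hr hab hcd hf hG hf' hG' hgG
  linarith

end InnerProductSpace

theorem stmt_13_general (N : ℕ) (T : ℝ) (hT : 1 ≤ T)
    (ut uθ τ : ℝ → ℝ → EuclideanSpace ℝ (Fin N))
    (hc1 : Continuous fun p : ℝ × ℝ => ut p.1 p.2)
    (hc2 : Continuous fun p : ℝ × ℝ => uθ p.1 p.2)
    (hτ1 : ∀ t, IntervalIntegrable (fun θ => ‖τ t θ‖^2) volume 0 π)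
    (hτ2 : IntervalIntegrable (fun t => ∫ θ in (0:ℝ)..π, ‖τ t θ‖^2) volume (-T) T)
    (α Eu : ℝ)
    (hEu : Eu = (1/2) * ∫ t in (-T)..T, ∫ θ in (0:ℝ)..π, (‖ut t θ‖^2 + ‖uθ t θ‖^2))
    (hα : ∀ t₀ ∈ Set.Icc (-T) T,
      α = (∫ θ in (0:ℝ)..π, (‖ut t₀ θ‖^2 - ‖uθ t₀ θ‖^2))
        - 2 * ∫ t in (0:ℝ)..t₀, ∫ θ in (0:ℝ)..π, (inner ℝ (τ t θ) (ut t θ) : ℝ)) :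
    |α| ≤ (2 / T) * Eu
      + 2 * Real.sqrt (∫ t in (-T)..T, ∫ θ in (0:ℝ)..π, ‖τ t θ‖^2)
        * Real.sqrt (2 * Eu) := by
  have hT0 : 0 < T := by linarith
  set K : ℝ → ℝ := fun t => ∫ θ in (0:ℝ)..π, (‖ut t θ‖^2 + ‖uθ t θ‖^2)
  have hKc : Continuous K :=
    intervalIntegral.continuous_parametric_intervalIntegral_of_continuous' (by fun_prop) 0 π
  have hKE : ∀ a b, -T ≤ a → a ≤ b → b ≤ T → ∫ t in a..b, K t ≤ 2 * Eu := fun a b ha hab hb => by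
    rw [show 2 * Eu = ∫ t in (-T)..T, K t by rw [hEu]; ring]
    exact intervalIntegral.integral_mono_interval ha hab hb
      (ae_of_all _ fun t => intervalIntegral.integral_nonneg pi_pos.le fun θ _ => by positivity)
      (hKc.intervalIntegrable _ _)
  obtain ⟨t₀, ⟨ht₀, ht₀T⟩, hKt₀⟩ :=
    exists_mem_Ioc_le_intervalIntegral_div hT0 (hKc.intervalIntegrable 0 T)
  have hslice : |∫ θ in (0:ℝ)..π, (‖ut t₀ θ‖^2 - ‖uθ t₀ θ‖^2)| ≤ 2 / T * Eu :=
    calc _ ≤ K t₀ := abs_intervalIntegral_norm_sq_sub_le pi_pos.le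
          (Continuous.intervalIntegrable (by fun_prop) _ _)
      _ ≤ (∫ t in (0:ℝ)..T, K t) / T := by rwa [sub_zero] at hKt₀
      _ ≤ 2 * Eu / T := by gcongr; exact hKE 0 T (by linarith) hT0.le le_rfl
      _ = 2 / T * Eu := by ring
  have hτ : |∫ t in (0:ℝ)..t₀, ∫ θ in (0:ℝ)..π, inner ℝ (τ t θ) (ut t θ)|
      ≤ √(∫ t in (-T)..T, ∫ θ in (0:ℝ)..π, ‖τ t θ‖^2) * √(2 * Eu) := by
    refine (abs_integral_integral_inner_le_sqrt_mul_sqrt ht₀.le pi_pos.le hτ1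
      (fun t => Continuous.intervalIntegrable (by fun_prop) _ _)
      (hτ2.mono_set (uIcc_subset_uIcc (mem_uIcc_of_le (by linarith) hT0.le)
        (mem_uIcc_of_le (by linarith) ht₀T)))
      (hKc.intervalIntegrable _ _) fun t θ => le_add_of_nonneg_right (sq_nonneg _)).trans ?_
    gcongr
    · exact intervalIntegral.integral_mono_interval (by linarith) ht₀.le ht₀T
        (ae_of_all _ fun t => intervalIntegral.integral_nonneg pi_pos.le fun θ _ => by positivity)
        hτ2
    · exact hKE 0 t₀ (by linarith) ht₀.le ht₀T
  rw [hα t₀ ⟨by linarith, ht₀T⟩]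
  refine (abs_sub _ _).trans ?_
  rw [abs_mul, abs_two]
  linarith

/-- Bound on the Pohozaev-type constant: if `α` is independent of the time slice on
`Q = [-T,T] × [0,π]`, then `|α| ≤ (2/T) E(u) + 2 ‖τ‖_{L²(Q)} √(2E(u))`. -/
theorem stmt_13 (N : ℕ) (T : ℝ) (hT : 1 ≤ T)
    (u ut uθ τ : ℝ → ℝ → EuclideanSpace ℝ (Fin N))
    (hut : ∀ t θ, HasDerivAt (fun s => u s θ) (ut t θ) t)
    (huθ : ∀ t θ, HasDerivAt (fun φ => u t φ) (uθ t θ) θ)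
    (hc1 : Continuous fun p : ℝ × ℝ => ut p.1 p.2)
    (hc2 : Continuous fun p : ℝ × ℝ => uθ p.1 p.2)
    (hτ1 : ∀ t, IntervalIntegrable (fun θ => ‖τ t θ‖^2) volume 0 π)
    (hτ2 : IntervalIntegrable (fun t => ∫ θ in (0:ℝ)..π, ‖τ t θ‖^2) volume (-T) T)
    (hτ3 : ∀ t₀ ∈ Set.Icc (-T) T,
      IntervalIntegrable (fun t => ∫ θ in (0:ℝ)..π, (inner ℝ (τ t θ) (ut t θ) : ℝ))
        volume 0 t₀)
    (α Eu : ℝ)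
    (hEu : Eu = (1/2) * ∫ t in (-T)..T, ∫ θ in (0:ℝ)..π, (‖ut t θ‖^2 + ‖uθ t θ‖^2))
    (hα : ∀ t₀ ∈ Set.Icc (-T) T,
      α = (∫ θ in (0:ℝ)..π, (‖ut t₀ θ‖^2 - ‖uθ t₀ θ‖^2))
        - 2 * ∫ t in (0:ℝ)..t₀, ∫ θ in (0:ℝ)..π, (inner ℝ (τ t θ) (ut t θ) : ℝ)) :
    |α| ≤ (2 / T) * Eu
      + 2 * Real.sqrt (∫ t in (-T)..T, ∫ θ in (0:ℝ)..π, ‖τ t θ‖^2)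
        * Real.sqrt (2 * Eu) :=
  stmt_13_general N T hT ut uθ τ hc1 hc2 hτ1 hτ2 α Eu hEu hα
end
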